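/- arXiv:1911.03689 — 2 statements merged into one kernel-verified Lean document; each statement's English description precedes it below -/
import Mathlib

section
/- Let p be a prime, n ≥ 2, F a finite field with q = p^n elements, and 1 ≤ k ≤ p − 1. Then the set {f ∈ F[x] : deg f ≤ q − 2, f(0) = 0, and (φ − id)^k(f) = 0} has exactly q^{k·p^{n−1}} elements. (Equivalently, the k-th generalized eigenspace of φ for eigenvalue 1 inside this space has F-dimension k·p^{n−1}.) -/
open Polynomial

/-- The map `φ_r : f(x) ↦ f(x+r) − f(r)` on polynomials over a commutative ring. -/
noncomputable def phiMap {R : Type*} [CommRing R] (r : R) (f : R[X]) : R[X] :=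
  f.comp (X + C r) - C (f.eval r)

/-!
Evaluation identifies the polynomials of degree `≤ q - 2` over `F` with the functions `F → F`
whose values sum to zero (for `deg f < q`, `∑ₓ f(x) = -[X^(q-1)] f`). On functions vanishing
at `0` it turns `φ - id` into `u ↦ Δu - Δu(0)`, where `Δ` is the forward difference with step
`1`, so `(φ - id)^k u = 0` says that `Δ^k u` is constant.

Translation by `1` splits `F` into `p^(n-1)` cycles of length `p`. On a cycle `Δ^(p-1)` is the sum
over the cycle, because `(p-1).choose i ≡ (-1)^i [MOD p]`. Hence a function on a cycle is a
difference exactly when it sums to zero, and `Δ^k v = c` has `q^k` solutions for each constant `c`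
as long as `k ≤ p - 1`. Cycle by cycle, `Δ^k g = c` then has `q^(k p^(n-1))` solutions on `F` for
each `c`, and normalizing `g(0) = 0` while letting `c` vary leaves the same number. Since the number
of cycles is divisible by `p`, every such `u` sums to zero over `F`, so it is the function of a
polynomial of degree `≤ q - 2`.
-/

open fwdDiff

section FwdDiff

variable {M M' G : Type*} [AddCommMonoid M] [AddCommMonoid M'] [AddCommGroup G]

theorem fwdDiff_iter_succ_const (h : M) (g : G) (m : ℕ) :
    (Δ_[h])^[m + 1] (fun _ : M => g) = fun _ => 0 := by
  rw [Function.iterate_succ_apply, fwdDiff_const, Function.iterate_fixed (fwdDiff_const h 0)]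

theorem fwdDiff_iter_comp {g : M → M'} {h : M} {h' : M'} (hg : ∀ x, g (x + h) = g x + h')
    (u : M' → G) (m : ℕ) : (Δ_[h])^[m] (u ∘ g) = (Δ_[h'])^[m] u ∘ g := by
  induction m with
  | zero => rfl
  | succ m ih =>
    rw [Function.iterate_succ_apply', Function.iterate_succ_apply', ih]
    funext x
    simp [fwdDiff, hg]

end FwdDiff

theorem natCast_choose_pred_eq_neg_one_pow {p : ℕ} [hp : Fact p.Prime] {R : Type*} [Ring R]
    [CharP R p] {k : ℕ} (hk : k ≤ p - 1) : ((p - 1).choose k : R) = (-1) ^ k := by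
  induction k with
  | zero => simp
  | succ k ih =>
    have hpascal : ((p - 1 + 1).choose (k + 1) : R) =
        (p - 1).choose k + (p - 1).choose (k + 1) := by
      exact_mod_cast congrArg (Nat.cast (R := R)) (Nat.choose_succ_succ (p - 1) k)
    rw [Nat.sub_add_cancel hp.out.one_le, (CharP.cast_eq_zero_iff R p _).2
      (hp.out.dvd_choose_self k.succ_ne_zero (by omega)), ih (by omega)] at hpascal
    rw [pow_succ, mul_neg_one]
    exact (neg_eq_of_add_eq_zero_right hpascal.symm).symm

namespace ZMod

section Antiderivative

variable {p : ℕ} [NeZero p] {M : Type*}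

theorem sum_range_natCast [AddCommMonoid M] (f : ZMod p → M) :
    ∑ i ∈ Finset.range p, f i = ∑ x, f x :=
  Finset.sum_nbij' (fun i => (i : ZMod p)) val (by simp) (by simp [val_lt])
    (fun i hi => val_cast_of_lt (Finset.mem_range.1 hi)) (by simp) (by simp)

variable [AddCommGroup M]

theorem eq_of_fwdDiff_eq {v v' : ZMod p → M} (h0 : v 0 = v' 0)
    (h : Δ_[1] v = Δ_[1] v') : v = v' := by
  have hnat : ∀ m : ℕ, v m = v' m := by
    intro m
    induction m with
    | zero => simpa using h0
    | succ m ih =>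
      have hm := congrFun h m
      simp only [fwdDiff, ih] at hm
      simpa using hm
  funext j
  rw [← natCast_zmod_val j]
  exact hnat j.val

theorem exists_fwdDiff_eq (a : M) {w : ZMod p → M} (hw : ∑ x, w x = 0) :
    ∃ v : ZMod p → M, v 0 = a ∧ Δ_[1] v = w := by
  let S : ℕ → M := fun m => ∑ i ∈ Finset.range m, w i
  have hS : ∀ m ≤ p, S (m % p) = S m := by
    intro m hm
    rcases hm.lt_or_eq with hm | rfl
    · rw [Nat.mod_eq_of_lt hm]
    · simp [S, sum_range_natCast, hw]
  refine ⟨fun j => a + S j.val, by simp [S], funext fun j => ?_⟩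
  rw [fwdDiff, val_add, val_one_eq_one_mod, Nat.add_mod_mod, hS _ (val_lt j),
    add_sub_add_left_eq_sub]
  simp only [S, Finset.sum_range_succ, add_sub_cancel_left, natCast_zmod_val]

end Antiderivative

variable {p : ℕ} [hp : Fact p.Prime] {R : Type*} [Ring R] [CharP R p]

theorem fwdDiff_iter_pred_eq_sum (v : ZMod p → R) (j : ZMod p) :
    (Δ_[1])^[p - 1] v j = ∑ x, v x := by
  have hp1 : p - 1 + 1 = p := Nat.sub_add_cancel hp.out.one_le
  have hsign : (-1 : R) ^ (p - 1) = 1 := by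
    have h := neg_one_pow_char R p
    rwa [← hp1, pow_succ, mul_neg_one, neg_inj] at h
  have hcoeff : ∀ k ∈ Finset.range p,
      ((-1 : ℤ) ^ (p - 1 - k) * (p - 1).choose k : ℤ) • v (j + k • 1) = v (j + k) := by
    intro k hk
    have hk : k ≤ p - 1 := by have := Finset.mem_range.1 hk; omega
    rw [zsmul_eq_mul, Int.cast_mul, Int.cast_pow, Int.cast_neg, Int.cast_one, Int.cast_natCast,
      natCast_choose_pred_eq_neg_one_pow hk, ← pow_add, Nat.sub_add_cancel hk, hsign, one_mul,
      nsmul_one]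
  rw [fwdDiff_iter_eq_sum_shift, hp1, Finset.sum_congr rfl hcoeff,
    sum_range_natCast (fun x => v (j + x))]
  exact Fintype.sum_equiv (Equiv.addLeft j) _ _ fun _ => rfl

theorem sum_eq_zero_of_fwdDiff_iter_eq_const {k : ℕ} (hk : k < p - 1) {v : ZMod p → R} {c : R}
    (hv : (Δ_[1])^[k] v = fun _ => c) : ∑ x, v x = 0 := by
  obtain ⟨m, hm⟩ := Nat.exists_eq_add_of_lt hk
  rw [← fwdDiff_iter_pred_eq_sum v 0, hm, show k + m + 1 = m + 1 + k by omega,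
    Function.iterate_add_apply, hv, fwdDiff_iter_succ_const]

theorem card_fwdDiff_iter_eq_const {k : ℕ} (hk : k ≤ p - 1) (c : R) :
    Nat.card {v : ZMod p → R // (Δ_[1])^[k] v = fun _ => c} = Nat.card R ^ k := by
  induction k with
  | zero => simp
  | succ k ih =>
    let e : {v : ZMod p → R // (Δ_[1])^[k + 1] v = fun _ => c} →
        R × {w : ZMod p → R // (Δ_[1])^[k] w = fun _ => c} :=
      fun v => (v.1 0, ⟨Δ_[1] v.1, by rw [← Function.iterate_succ_apply]; exact v.2⟩)
    have he : Function.Bijective e := by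
      refine ⟨fun v v' h => Subtype.ext (eq_of_fwdDiff_eq (congrArg Prod.fst h)
        (congrArg (fun x => x.2.1) h)), fun ⟨a, w⟩ => ?_⟩
      obtain ⟨v, hv0, hv⟩ :=
        exists_fwdDiff_eq a (sum_eq_zero_of_fwdDiff_iter_eq_const (by omega) w.2)
      refine ⟨⟨v, by rw [Function.iterate_succ_apply, hv]; exact w.2⟩, ?_⟩
      simp [e, hv0, hv]
    rw [Nat.card_eq_of_bijective e he, Nat.card_prod, ih (by omega), pow_succ, mul_comm]

end ZMod

section Orbits

variable {p : ℕ} [Fact p.Prime] {R : Type*} [Ring R] [CharP R p]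
  {A K : Type*} [AddCommMonoid A] {h : A} {E : K × ZMod p ≃ A}

theorem card_fwdDiff_iter_eq_const_of_equiv [Fintype K] (hE : ∀ t j, E (t, j + 1) = E (t, j) + h)
    {k : ℕ} (hk : k ≤ p - 1) (c : R) :
    Nat.card {g : A → R // (Δ_[h])^[k] g = fun _ => c} = (Nat.card R ^ k) ^ Nat.card K := by
  let e : (A → R) ≃ (K → ZMod p → R) :=
    (E.arrowCongr (Equiv.refl R)).symm.trans (Equiv.curry ..)
  have hiff : ∀ g : A → R, (Δ_[h])^[k] g = (fun _ => c) ↔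
      ∀ t, (Δ_[1])^[k] (e g t) = fun _ => c := by
    intro g
    have hcomp : ∀ t, (Δ_[1])^[k] (e g t) = (Δ_[h])^[k] g ∘ fun j => E (t, j) :=
      fun t => fwdDiff_iter_comp (hE t) g k
    simp only [hcomp, funext_iff, Function.comp_apply]
    rw [← E.forall_congr_right, Prod.forall]
  rw [Nat.card_congr
      ((e.subtypeEquiv (q := fun f => ∀ t, (Δ_[1])^[k] (f t) = fun _ => c) hiff).trans
        (Equiv.subtypePiEquivPi (p := fun _ v => (Δ_[1])^[k] v = fun _ => c))), Nat.card_pi,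
    Finset.prod_congr rfl (fun t _ => ZMod.card_fwdDiff_iter_eq_const hk c), Finset.prod_const,
    Finset.card_univ, ← Nat.card_eq_fintype_card]

theorem sum_eq_sum_fwdDiff_iter_pred [Fintype A] [Fintype K]
    (hE : ∀ t j, E (t, j + 1) = E (t, j) + h) (u : A → R) :
    ∑ a, u a = ∑ t, (Δ_[h])^[p - 1] u (E (t, 0)) := by
  rw [← E.sum_comp, Fintype.sum_prod_type]
  refine Finset.sum_congr rfl fun t _ => ?_
  rw [← ZMod.fwdDiff_iter_pred_eq_sum _ 0]
  exact congrFun (fwdDiff_iter_comp (g := fun j => E (t, j)) (hE t) u _) 0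

theorem sum_eq_zero_of_fwdDiff_iter_eq_const_of_equiv [Fintype A] [Fintype K]
    (hE : ∀ t j, E (t, j + 1) = E (t, j) + h) (hK : p ∣ Nat.card K) {k : ℕ} (hk : k ≤ p - 1)
    {u : A → R} {c : R} (hu : (Δ_[h])^[k] u = fun _ => c) : ∑ a, u a = 0 := by
  obtain ⟨m, hm⟩ := Nat.exists_eq_add_of_le hk
  rw [sum_eq_sum_fwdDiff_iter_pred hE, hm, add_comm, Function.iterate_add_apply, hu]
  cases m with
  | zero =>
    rw [Function.iterate_zero_apply, Finset.sum_const, Finset.card_univ,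
      ← Nat.card_eq_fintype_card, nsmul_eq_mul, (CharP.cast_eq_zero_iff R p _).2 hK, zero_mul]
  | succ m => simp [fwdDiff_iter_succ_const]

theorem card_apply_zero_eq_zero_fwdDiff_iter_eq_const [Fintype R] [Fintype K]
    (hE : ∀ t j, E (t, j + 1) = E (t, j) + h) {k : ℕ} (hk1 : 1 ≤ k) (hk : k ≤ p - 1) :
    Nat.card {u : A → R // u 0 = 0 ∧ ∃ c, (Δ_[h])^[k] u = fun _ => c} =
      (Nat.card R ^ k) ^ Nat.card K := by
  obtain ⟨m, rfl⟩ := Nat.exists_eq_add_of_le' hk1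
  have hconst : ∀ (u : A → R) (a : R), (Δ_[h])^[m + 1] (u + fun _ => a) = (Δ_[h])^[m + 1] u :=
    fun u a => by rw [fwdDiff_iter_add, fwdDiff_iter_succ_const]; exact add_zero _
  let e : R × {u : A → R // u 0 = 0 ∧ ∃ c, (Δ_[h])^[m + 1] u = fun _ => c} →
      Σ c : R, {g : A → R // (Δ_[h])^[m + 1] g = fun _ => c} :=
    fun au => ⟨(Δ_[h])^[m + 1] au.2.1 0, au.2.1 + fun _ => au.1, by
      obtain ⟨c, hc⟩ := au.2.2.2
      rw [hconst, hc]⟩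
  have he : Function.Bijective e := by
    refine ⟨fun ⟨a, u⟩ ⟨a', u'⟩ huu => ?_, fun ⟨c, g, hg⟩ => ?_⟩
    · have hsum : u.1 + (fun _ => a) = u'.1 + fun _ => a' := congrArg (fun x => x.2.1) huu
      have ha : a = a' := by simpa [u.2.1, u'.2.1] using congrFun hsum 0
      subst ha
      exact Prod.ext rfl (Subtype.ext (add_right_cancel hsum))
    · refine ⟨(g 0, ⟨g + fun _ => -g 0, by simp, c, by rw [hconst, hg]⟩), ?_⟩
      refine Sigma.subtype_ext ?_ ?_
      · simp [e, hconst, hg]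
      · funext x
        simp [e]
  have : Finite A := .of_equiv _ E
  have hR : 0 < Nat.card R := Nat.card_pos
  rw [← Nat.mul_right_inj hR.ne', ← Nat.card_prod, Nat.card_eq_of_bijective e he,
    Nat.card_sigma, Finset.sum_congr rfl fun c _ => card_fwdDiff_iter_eq_const_of_equiv hE hk c,
    Finset.sum_const, Finset.card_univ, smul_eq_mul, Nat.card_eq_fintype_card]

end Orbits

theorem exists_equiv_prod_zmod {p : ℕ} [Fact p.Prime] {V : Type*} [AddCommGroup V]
    [Module (ZMod p) V] {x : V} (hx : x ≠ 0) :
    ∃ (K : Submodule (ZMod p) V) (E : K × ZMod p ≃ V), ∀ t j, E (t, j) = t + j • x := by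
  obtain ⟨K, hK⟩ := (Submodule.span (ZMod p) {x}).exists_isCompl
  exact ⟨K, (Equiv.prodCongr (Equiv.refl K)
    (LinearEquiv.toSpanNonzeroSingleton (ZMod p) V x hx).toEquiv).trans
      (Submodule.prodEquivOfIsCompl K _ hK.symm).toEquiv, fun t j => rfl⟩

section PhiMap

variable {R : Type*} [CommRing R]

theorem natDegree_phiMap_le (r : R) (f : R[X]) : (phiMap r f).natDegree ≤ f.natDegree := by
  refine (natDegree_sub_le _ _).trans (max_le ?_ (by simp))
  rw [← taylor_apply, natDegree_taylor]

theorem natDegree_iterate_phiMap_sub_self_le (r : R) (k : ℕ) (f : R[X]) :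
    ((fun g => phiMap r g - g)^[k] f).natDegree ≤ f.natDegree := by
  induction k with
  | zero => rfl
  | succ k ih =>
    rw [Function.iterate_succ_apply']
    exact (natDegree_sub_le _ _).trans (max_le (natDegree_phiMap_le r _) le_rfl) |>.trans ih

theorem eval_iterate_phiMap_sub_self (r : R) {f : R[X]} (hf : f.eval 0 = 0) (k : ℕ) (y : R) :
    ((fun g => phiMap r g - g)^[k] f).eval y =
      (Δ_[r])^[k] (fun x => f.eval x) y - (Δ_[r])^[k] (fun x => f.eval x) 0 := by
  induction k generalizing y with
  | zero => simp [hf]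
  | succ k ih =>
    simp only [Function.iterate_succ_apply']
    set g := (fun g => phiMap r g - g)^[k] f
    simp only [phiMap, eval_sub, eval_comp, eval_add, eval_X, eval_C, ih, fwdDiff, zero_add]
    abel

end PhiMap

namespace FiniteField

variable {F : Type*} [Field F] [Fintype F]

theorem sum_pow_card_sub_one : ∑ x : F, x ^ (Fintype.card F - 1) = -1 := by
  classical
  have hpow : ∀ x : F, x ^ (Fintype.card F - 1) = if x = 0 then 0 else 1 := by
    intro x
    split_ifs with hx
    · rw [hx, zero_pow (Nat.sub_ne_zero_of_lt Fintype.one_lt_card)]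
    · exact pow_card_sub_one_eq_one x hx
  simp only [hpow, Finset.sum_ite, Finset.sum_const_zero, zero_add, Finset.sum_const, nsmul_one,
    Finset.filter_ne', Finset.mem_univ, Finset.card_erase_of_mem, Finset.card_univ]
  rw [Nat.cast_sub Fintype.card_pos, Nat.cast_one, cast_card_eq_zero, zero_sub]

theorem sum_eval_eq_neg_coeff {f : F[X]} (hf : f.natDegree < Fintype.card F) :
    ∑ x : F, f.eval x = -f.coeff (Fintype.card F - 1) := by
  have hq : Fintype.card F - 1 + 1 = Fintype.card F := Nat.sub_add_cancel Fintype.card_pos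
  calc ∑ x : F, f.eval x
      = ∑ i ∈ Finset.range (Fintype.card F), f.coeff i * ∑ x : F, x ^ i := by
        simp_rw [eval_eq_sum_range' hf, Finset.mul_sum]
        exact Finset.sum_comm
    _ = -f.coeff (Fintype.card F - 1) := by
        rw [← hq, Finset.sum_range_succ, Nat.add_sub_cancel, sum_pow_card_sub_one,
          Finset.sum_eq_zero fun i hi => by
            rw [sum_pow_lt_card_sub_one F i (Finset.mem_range.1 hi), mul_zero], zero_add,
          mul_neg_one]

theorem exists_natDegree_le_card_sub_two_eval_eq {u : F → F} (hu : ∑ x, u x = 0) :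
    ∃ f : F[X], f.natDegree ≤ Fintype.card F - 2 ∧ ∀ x, f.eval x = u x := by
  classical
  set f := Lagrange.interpolate Finset.univ id u
  have hf : f.natDegree < Fintype.card F := by
    have hdeg : f.degree < Fintype.card F := Lagrange.degree_interpolate_lt _ (Set.injOn_id _)
    by_cases hf0 : f = 0
    · simp [hf0, Fintype.card_pos]
    · exact (natDegree_lt_iff_degree_lt hf0).2 hdeg
  have heval : ∀ x, f.eval x = u x := fun x =>
    Lagrange.eval_interpolate_at_node u (Set.injOn_id _) (Finset.mem_univ x)
  have hcoeff : f.coeff (Fintype.card F - 1) = 0 := by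
    rw [← neg_eq_zero, ← sum_eval_eq_neg_coeff hf]
    simpa [heval] using hu
  have hle := natDegree_le_pred (n := Fintype.card F - 1) (by omega) hcoeff
  exact ⟨f, by omega, heval⟩

variable (r : F)

theorem iterate_phiMap_sub_self_eq_zero_iff {f : F[X]} (hdeg : f.natDegree < Fintype.card F)
    (hf : f.eval 0 = 0) (k : ℕ) :
    (fun g => phiMap r g - g)^[k] f = 0 ↔
      ∃ c, (Δ_[r])^[k] (fun x => f.eval x) = fun _ => c := by
  constructor
  · intro h
    refine ⟨(Δ_[r])^[k] (fun x => f.eval x) 0, funext fun y => ?_⟩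
    have hy := eval_iterate_phiMap_sub_self r hf k y
    rw [h, eval_zero] at hy
    exact sub_eq_zero.1 hy.symm
  · rintro ⟨c, hc⟩
    refine eq_zero_of_natDegree_lt_card_of_eval_eq_zero _ Function.injective_id (fun y => ?_)
      ((natDegree_iterate_phiMap_sub_self_le r k f).trans_lt hdeg)
    rw [id, eval_iterate_phiMap_sub_self r hf, hc, sub_self]

theorem card_iterate_phiMap_sub_self_eq_zero {k : ℕ}
    (hsum : ∀ u : F → F, u 0 = 0 → (∃ c, (Δ_[r])^[k] u = fun _ => c) → ∑ x, u x = 0) :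
    Nat.card {f : F[X] // f.natDegree ≤ Fintype.card F - 2 ∧ f.eval 0 = 0 ∧
        (fun g => phiMap r g - g)^[k] f = 0} =
      Nat.card {u : F → F // u 0 = 0 ∧ ∃ c, (Δ_[r])^[k] u = fun _ => c} := by
  have hlt : Fintype.card F - 2 < Fintype.card F := Nat.sub_lt Fintype.card_pos two_pos
  refine Nat.card_eq_of_bijective (fun f => ⟨fun x => f.1.eval x, f.2.2.1,
    (iterate_phiMap_sub_self_eq_zero_iff r (f.2.1.trans_lt hlt) f.2.2.1 k).1 f.2.2.2⟩)
    ⟨fun f g hfg => ?_, fun u => ?_⟩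
  · exact Subtype.ext (eq_of_natDegree_lt_card_of_eval_eq _ _ Function.injective_id
      (congrFun (congrArg Subtype.val hfg)) (max_lt (f.2.1.trans_lt hlt) (g.2.1.trans_lt hlt)))
  · obtain ⟨f, hdeg, hf⟩ := exists_natDegree_le_card_sub_two_eval_eq (hsum u.1 u.2.1 u.2.2)
    have hfu : (fun x => f.eval x) = u.1 := funext hf
    have hf0 : f.eval 0 = 0 := (hf 0).trans u.2.1
    exact ⟨⟨f, hdeg, hf0, (iterate_phiMap_sub_self_eq_zero_iff r (hdeg.trans_lt hlt) hf0 k).2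
      (hfu ▸ u.2.2)⟩, Subtype.ext hfu⟩

end FiniteField

/-- over `F = 𝔽_{p^n}` with `n ≥ 2` and `1 ≤ k ≤ p − 1`, the set of
polynomials `f` with `deg f ≤ q − 2`, `f(0) = 0` and `(φ − id)^k(f) = 0` has
exactly `q^(k·p^(n−1))` elements, i.e. this generalized eigenspace has
`F`-dimension `k·p^(n−1)`. -/
theorem phi_generalized_eigenspace_card {F : Type*} [Field F] [Fintype F]
    (p n : ℕ) (hp : p.Prime) (hn : 2 ≤ n) (hcard : Fintype.card F = p ^ n)
    (k : ℕ) (hk1 : 1 ≤ k) (hk2 : k ≤ p - 1) :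
    Nat.card {f : F[X] // f.natDegree ≤ p ^ n - 2 ∧ f.eval 0 = 0 ∧
        (fun g : F[X] => phiMap (1 : F) g - g)^[k] f = 0} =
      (p ^ n) ^ (k * p ^ (n - 1)) := by
  have := Fact.mk hp
  have : CharP F p := charP_of_card_eq_prime_pow hcard
  let : Module (ZMod p) F := (ZMod.algebra F p).toModule
  obtain ⟨K, E, hE⟩ := exists_equiv_prod_zmod (p := p) (one_ne_zero : (1 : F) ≠ 0)
  have hE1 : ∀ t j, E (t, j + 1) = E (t, j) + 1 := fun t j => by
    rw [hE, hE, add_smul, one_smul, add_assoc]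
  have : Fintype K := Fintype.ofFinite K
  have hK : Nat.card K = p ^ (n - 1) := by
    have h := Nat.card_congr E
    rw [Nat.card_prod, Nat.card_zmod, Nat.card_eq_fintype_card (α := F), hcard,
      ← pow_sub_one_mul (by omega : n ≠ 0)] at h
    exact Nat.eq_of_mul_eq_mul_right hp.pos h
  have hpK : p ∣ Nat.card K := hK ▸ dvd_pow_self p (by omega)
  rw [← hcard, FiniteField.card_iterate_phiMap_sub_self_eq_zero 1 fun u _ ⟨_, hc⟩ =>
      sum_eq_zero_of_fwdDiff_iter_eq_const_of_equiv hE1 hpK hk2 hc,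
    card_apply_zero_eq_zero_fwdDiff_iter_eq_const hE1 hk1 hk2, hK, Nat.card_eq_fintype_card,
    pow_mul]
end

section
/- Let p be a prime, n ≥ 1, F a finite field with q = p^n elements, and let a ∈ F be such that 1, a, a², …, a^{n−1} are linearly independent over the prime field 𝔽_p. For every polynomial f ∈ F[x] with deg f ≤ q − 2 and f(0) = 0, one has φ_{a^i}(f) = f for all 0 ≤ i ≤ n−1 if and only if f lies in the F-linear span of the monomials {x^{p^k} : 0 ≤ k ≤ n−1} (i.e. f is a linearized polynomial). In particular this common eigenspace has F-dimension n. -/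
/-!
If `φ_{a^i} f = f` for all `i`, then `f(X + r) - f(X)` is constant for `r = a^i`. The `r`
with this property form an additive subgroup of `F`, which is all of `F` because the `a^i` form an
`𝔽_p`-basis. Then each Hasse derivative `D^(j) f` with `j ≥ 1` takes the constant value `f_j` on
all of `F`; since `deg f < q` it is that constant, so `(m choose j) f_m = 0` for `0 < j < m`, and
by the converse of Lucas' theorem every exponent of `f` is a power of `p`. Conversely
`(X + r)^(p^k) = X^(p^k) + r^(p^k)` makes every linearized polynomial a fixed point of each `φ_r`.
-/

open Polynomial

namespace Polynomial

section CommRing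

variable {R : Type*} [CommRing R]

def addConstPeriods (f : R[X]) : AddSubgroup R where
  carrier := {r | ∃ c, taylor r f = f + C c}
  zero_mem' := ⟨0, by simp⟩
  add_mem' := by
    rintro r s ⟨c, hc⟩ ⟨d, hd⟩
    exact ⟨c + d, by rw [← taylor_taylor, hd, map_add, taylor_C, hc, C_add, add_assoc]⟩
  neg_mem' := by
    rintro r ⟨c, hc⟩
    refine ⟨-c, ?_⟩
    have h := congrArg (taylor (-r)) hc
    rw [taylor_taylor, neg_add_cancel, taylor_zero, map_add, taylor_C] at h
    rw [eq_sub_of_add_eq h.symm, sub_eq_add_neg, C_neg]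

theorem mem_span_X_pow_of_support {f : R[X]} {s : Set R[X]}
    (hs : ∀ m ∈ f.support, X ^ m ∈ s) : f ∈ Submodule.span R s := by
  rw [f.as_sum_support_C_mul_X_pow]
  exact Submodule.sum_mem _ fun m hm => by
    rw [← smul_eq_C_mul]
    exact Submodule.smul_mem _ _ (Submodule.subset_span (hs m hm))

theorem linearIndependent_X_pow [Nontrivial R] {ι : Type*} {e : ι → ℕ}
    (he : Function.Injective e) : LinearIndependent R fun i => (X : R[X]) ^ e i := by
  have h := (basisMonomials R).linearIndependent.comp e he
  simpa [Function.comp_def, coe_basisMonomials, monomial_one_right_eq_X_pow] using h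

theorem finrank_span_X_pow_pow [Nontrivial R] {p : ℕ} (hp : 1 < p) (n : ℕ) :
    Module.finrank R (Submodule.span R {g : R[X] | ∃ k < n, g = X ^ p ^ k}) = n := by
  have hgen : {g : R[X] | ∃ k < n, g = X ^ p ^ k} =
      Set.range fun k : Fin n => X ^ p ^ (k : ℕ) := by
    ext g
    exact ⟨fun ⟨k, hk, hg⟩ => ⟨⟨k, hk⟩, hg.symm⟩, fun ⟨k, hg⟩ => ⟨k, k.isLt, hg.symm⟩⟩
  rw [hgen, finrank_span_eq_card, Fintype.card_fin]
  exact linearIndependent_X_pow fun i j h => Fin.ext (Nat.pow_right_injective hp h)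

end CommRing

section IsDomain

variable {R : Type*} [CommRing R] [IsDomain R]

open Cardinal in
theorem choose_mul_coeff_eq_zero_of_addConstPeriods_eq_top {f : R[X]}
    (hf : addConstPeriods f = ⊤) (hdeg : f.natDegree < #R) {j m : ℕ} (hj : 0 < j)
    (hjm : j < m) : (m.choose j : R) * f.coeff m = 0 := by
  have hconst : hasseDeriv j f - C (f.coeff j) = 0 := by
    refine eq_zero_of_forall_eval_zero_of_natDegree_lt_card _ (fun r => ?_) ?_
    · obtain ⟨c, hc⟩ : r ∈ addConstPeriods f := hf ▸ AddSubgroup.mem_top r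
      rw [eval_sub, eval_C, ← taylor_coeff, hc, coeff_add, coeff_C, if_neg hj.ne', add_zero,
        sub_self]
    · refine lt_of_le_of_lt (Nat.cast_le.mpr ?_) hdeg
      refine (natDegree_sub_le _ _).trans (max_le ?_ (by simp))
      exact (natDegree_hasseDeriv_le f j).trans (Nat.sub_le _ _)
  have h := congrArg (coeff · (m - j)) hconst
  simpa [hasseDeriv_coeff, Nat.sub_add_cancel hjm.le,
    coeff_C_of_ne_zero (Nat.sub_ne_zero_of_lt hjm)] using h

open Cardinal in
theorem exists_eq_pow_of_mem_support_of_addConstPeriods_eq_top (p : ℕ) [Fact p.Prime]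
    [CharP R p] {f : R[X]} (hf : addConstPeriods f = ⊤) (hdeg : f.natDegree < #R) {m : ℕ}
    (hm : m ∈ f.support) (hm0 : 0 < m) : ∃ k, m = p ^ k := by
  refine ⟨_, Choose.eq_pow_multiplicity_of_choose_modEq_zero_nat hm0 fun j hj => ?_⟩
  obtain ⟨hj, hjm⟩ := Finset.mem_Icc.mp hj
  have h := choose_mul_coeff_eq_zero_of_addConstPeriods_eq_top hf hdeg hj (m := m) (by omega)
  rw [Nat.modEq_zero_iff_dvd, ← CharP.cast_eq_zero_iff R p]
  exact (mul_eq_zero.mp h).resolve_right (mem_support_iff.mp hm)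

open Cardinal in
theorem mem_span_X_pow_char_pow_of_addConstPeriods_eq_top (p : ℕ) [Fact p.Prime] [CharP R p]
    {f : R[X]} (hf : addConstPeriods f = ⊤) (hdeg : f.natDegree < #R) (hf0 : f.coeff 0 = 0) :
    f ∈ Submodule.span R {g : R[X] | ∃ k, p ^ k ≤ f.natDegree ∧ g = X ^ p ^ k} := by
  refine mem_span_X_pow_of_support fun m hm => ?_
  have hm0 : 0 < m := Nat.pos_of_ne_zero fun h => mem_support_iff.mp hm (h ▸ hf0)
  obtain ⟨k, rfl⟩ := exists_eq_pow_of_mem_support_of_addConstPeriods_eq_top p hf hdeg hm hm0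
  exact ⟨k, le_natDegree_of_mem_supp _ hm, rfl⟩

end IsDomain

end Polynomial

section PhiMap

variable {R : Type*} [CommRing R]

theorem mem_addConstPeriods_iff_phiMap_eq {f : R[X]} (hf : f.eval 0 = 0) {r : R} :
    r ∈ addConstPeriods f ↔ phiMap r f = f := by
  rw [phiMap, ← taylor_apply, sub_eq_iff_eq_add]
  refine ⟨fun ⟨c, hc⟩ => ?_, fun h => ⟨_, h⟩⟩
  have hc0 := congrArg (eval 0) hc
  rw [taylor_eval, zero_add, eval_add, eval_C, hf, zero_add] at hc0
  rw [hc, hc0]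

noncomputable def phiLinearMap (r : R) : R[X] →ₗ[R] R[X] :=
  taylor r - (Algebra.linearMap R R[X]).comp (leval r)

theorem phiLinearMap_apply (r : R) (f : R[X]) : phiLinearMap r f = phiMap r f := by
  simp [phiLinearMap, phiMap, taylor_apply]

theorem phiMap_X_pow_expChar_pow (p : ℕ) [ExpChar R p] (r : R) (k : ℕ) :
    phiMap r (X ^ p ^ k) = X ^ p ^ k := by
  rw [phiMap, X_pow_comp, add_pow_expChar_pow, eval_pow, eval_X, C_pow, add_sub_cancel_right]

theorem phiMap_eq_self_of_mem_span (p : ℕ) [ExpChar R p] (r : R) {f : R[X]}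
    (hf : f ∈ Submodule.span R {g : R[X] | ∃ k, g = X ^ p ^ k}) : phiMap r f = f := by
  have hle : Submodule.span R {g : R[X] | ∃ k, g = X ^ p ^ k} ≤
      LinearMap.eqLocus (phiLinearMap r) LinearMap.id := by
    rw [Submodule.span_le]
    rintro _ ⟨k, rfl⟩
    exact (phiLinearMap_apply r _).trans (phiMap_X_pow_expChar_pow p r k)
  exact (phiLinearMap_apply r f).symm.trans (hle hf)

end PhiMap

theorem ZMod.finrank_eq_of_card_eq_pow {M : Type*} [AddCommGroup M] [Fintype M] {p n : ℕ}
    [Fact p.Prime] [Module (ZMod p) M] (h : Fintype.card M = p ^ n) :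
    Module.finrank (ZMod p) M = n := by
  rw [Module.card_eq_pow_finrank (K := ZMod p), ZMod.card] at h
  exact Nat.pow_right_injective (Fact.out : p.Prime).two_le h

theorem AddSubgroup.eq_top_of_linearIndependent_zmod {M : Type*} [AddCommGroup M] [Fintype M]
    {p n : ℕ} [Fact p.Prime] [Module (ZMod p) M] (hcard : Fintype.card M = p ^ n)
    {v : Fin n → M} (hv : LinearIndependent (ZMod p) v) {H : AddSubgroup M}
    (hvH : ∀ i, v i ∈ H) : H = ⊤ :=
  (toZModSubmodule p).injective <| by
    have hcard' : Fintype.card (Fin n) = Module.finrank (ZMod p) M := by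
      rw [Fintype.card_fin, ZMod.finrank_eq_of_card_eq_pow hcard]
    rw [OrderIso.map_top, eq_top_iff, ← hv.span_eq_top_of_card_eq_finrank' hcard',
      Submodule.span_le]
    rintro _ ⟨i, rfl⟩
    exact hvH i

theorem common_eigenspace_linearized_general {F : Type*} [Field F] [Fintype F]
    (p n : ℕ) (hcard : Fintype.card F = p ^ n)
    [CharP F p] (a : F)
    (ha : letI : Algebra (ZMod p) F := ZMod.algebra F p
          LinearIndependent (ZMod p) (fun i : Fin n => a ^ (i : ℕ))) :
    (∀ f : F[X], f.natDegree ≤ p ^ n - 2 → f.eval 0 = 0 →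
      ((∀ i : ℕ, i ≤ n - 1 → phiMap (a ^ i) f = f) ↔
        f ∈ Submodule.span F {g : F[X] | ∃ k ≤ n - 1, g = X ^ p ^ k})) ∧
    Module.finrank F
      (Submodule.span F {g : F[X] | ∃ k ≤ n - 1, g = X ^ p ^ k}) = n := by
  let : Algebra (ZMod p) F := ZMod.algebra F p
  have hp : Fact p.Prime := ⟨CharP.char_is_prime F p⟩
  have hn : 0 < n := Nat.pos_of_ne_zero <| by
    rintro rfl
    exact (Fintype.one_lt_card (α := F)).ne' (by rw [hcard, pow_zero])
  have hgens : {g : F[X] | ∃ k ≤ n - 1, g = X ^ p ^ k} = {g | ∃ k < n, g = X ^ p ^ k} := by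
    simp_rw [Nat.le_sub_one_iff_lt hn]
  rw [hgens]
  refine ⟨fun f hdeg hf0 => ⟨fun hfix => ?_, fun hf i _ => ?_⟩,
    finrank_span_X_pow_pow hp.out.one_lt n⟩
  · have hper : addConstPeriods f = ⊤ := AddSubgroup.eq_top_of_linearIndependent_zmod hcard ha
      fun i => (mem_addConstPeriods_iff_phiMap_eq hf0).2 (hfix i (by omega))
    have hq : f.natDegree < p ^ n := by
      have := Nat.one_lt_pow hn.ne' hp.out.one_lt
      omega
    have hdeg' : (f.natDegree : Cardinal) < Cardinal.mk F := by
      rwa [Cardinal.mk_fintype, hcard, Nat.cast_lt]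
    refine Submodule.span_mono ?_ (mem_span_X_pow_char_pow_of_addConstPeriods_eq_top p hper hdeg'
      (by rwa [coeff_zero_eq_eval_zero]))
    rintro _ ⟨k, hk, rfl⟩
    exact ⟨k, (Nat.pow_lt_pow_iff_right hp.out.one_lt).mp (hk.trans_lt hq), rfl⟩
  · refine phiMap_eq_self_of_mem_span p _ (Submodule.span_mono ?_ hf)
    rintro _ ⟨k, -, rfl⟩
    exact ⟨k, rfl⟩

/-- over `F = 𝔽_{p^n}`, if `1, a, a², …, a^(n−1)` are linearly
independent over `𝔽_p`, then a polynomial `f` with `deg f ≤ q − 2` and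
`f(0) = 0` is fixed by all the maps `φ_{a^i}` (`0 ≤ i ≤ n−1`) iff it lies in the
span of the monomials `x^(p^k)` (`0 ≤ k ≤ n−1`), i.e. `f` is a linearized
polynomial; in particular this common eigenspace has `F`-dimension `n`. -/
theorem common_eigenspace_linearized {F : Type*} [Field F] [Fintype F]
    (p n : ℕ) (hp : p.Prime) (hn : 1 ≤ n) (hcard : Fintype.card F = p ^ n)
    [CharP F p] (a : F)
    (ha : letI : Algebra (ZMod p) F := ZMod.algebra F p
          LinearIndependent (ZMod p) (fun i : Fin n => a ^ (i : ℕ))) :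
    (∀ f : F[X], f.natDegree ≤ p ^ n - 2 → f.eval 0 = 0 →
      ((∀ i : ℕ, i ≤ n - 1 → phiMap (a ^ i) f = f) ↔
        f ∈ Submodule.span F {g : F[X] | ∃ k ≤ n - 1, g = X ^ p ^ k})) ∧
    Module.finrank F
      (Submodule.span F {g : F[X] | ∃ k ≤ n - 1, g = X ^ p ^ k}) = n :=
  common_eigenspace_linearized_general p n hcard a ha
end
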